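/- For the Airy kernel K_Airy(x,x) = ∫₀^∞ Ai(x+λ)² dλ, one has the closed form ∫_s^∞ K_Airy(x,x) dx = (1/3)(2s²Ai(s)² − 2s·Ai'(s)² − Ai(s)Ai'(s)) for all real s. -/

import Mathlib

/-!
Both integrals have elementary antiderivatives, thanks to `Ai'' = t Ai`:
`d/dx (x Ai² − Ai'²) = Ai²` and
`d/dx ((1/3)(2x² Ai² − 2x Ai'² − Ai Ai')) = x Ai² − Ai'²`.
So `K_Airy(x,x) = Ai'(x)² − x Ai(x)²`, and integrating once more gives the closed form.
Superexponential decay makes every boundary term at `+∞` vanish and every integrand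
integrable.
-/

open Real Filter MeasureTheory Set Topology

theorem setIntegral_Ioi_zero_comp_const_add (f : ℝ → ℝ) (x : ℝ) :
    ∫ l in Ioi 0, f (x + l) = ∫ u in Ioi x, f u := by
  have := (measurePreserving_add_left volume x).setIntegral_preimage_emb
    (measurableEmbedding_addLeft x) f (Ioi x)
  rwa [preimage_const_add_Ioi, sub_self] at this

def SuperexpDecay (f : ℝ → ℝ) : Prop :=
  ∀ c : ℝ, Tendsto (fun t => exp (c * t) * f t) atTop (𝓝 0)

namespace SuperexpDecay

variable {f g : ℝ → ℝ}

theorem tendsto_zero (hf : SuperexpDecay f) : Tendsto f atTop (𝓝 0) := by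
  simpa using hf 0

theorem congr (hf : SuperexpDecay f) (hfg : ∀ t, f t = g t) : SuperexpDecay g :=
  funext hfg ▸ hf

theorem const_mul (hf : SuperexpDecay f) (a : ℝ) : SuperexpDecay fun t => a * f t := fun c => by
  simpa [mul_left_comm] using (hf c).const_mul a

theorem sub (hf : SuperexpDecay f) (hg : SuperexpDecay g) : SuperexpDecay fun t => f t - g t :=
  fun c => by simpa [mul_sub] using (hf c).sub (hg c)

theorem mul (hf : SuperexpDecay f) (hg : SuperexpDecay g) : SuperexpDecay fun t => f t * g t :=
  fun c => by simpa [mul_assoc] using (hf c).mul hg.tendsto_zero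

theorem pow_mul (hf : SuperexpDecay f) (n : ℕ) : SuperexpDecay fun t => t ^ n * f t := by
  intro c
  have key : ∀ t, exp (c * t) * (t ^ n * f t) = t ^ n * exp (-t) * (exp ((c + 1) * t) * f t) := by
    intro t
    rw [show c * t = -t + (c + 1) * t by ring, exp_add]
    ring
  simpa [key] using (tendsto_pow_mul_exp_neg_atTop_nhds_zero n).mul (hf (c + 1))

theorem integrableOn_Ioi (hf : SuperexpDecay f) (hcont : Continuous f) (a : ℝ) :
    IntegrableOn f (Ioi a) := by
  refine integrable_of_isBigO_exp_neg one_pos hcont.continuousOn ?_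
  have h := ((hf 1).isBigO_one ℝ).mul (Asymptotics.isBigO_refl (fun t => exp (-t)) atTop)
  refine h.congr (fun t => ?_) fun t => by simp
  rw [one_mul, mul_right_comm, ← exp_add, add_neg_cancel, exp_zero, one_mul]

theorem integral_Ioi_of_hasDerivAt {F : ℝ → ℝ} (hF : ∀ t, HasDerivAt F (f t) t)
    (hF0 : Tendsto F atTop (𝓝 0)) (hf : SuperexpDecay f) (hcont : Continuous f) (a : ℝ) :
    ∫ t in Ioi a, f t = -F a := by
  rw [integral_Ioi_of_hasDerivAt_of_tendsto' (fun t _ => hF t) (hf.integrableOn_Ioi hcont a) hF0,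
    zero_sub]

end SuperexpDecay

section Airy

variable {Ai Ai' : ℝ → ℝ}

theorem hasDerivAt_mul_sq_sub_sq {x : ℝ} (hAi : HasDerivAt Ai (Ai' x) x)
    (hAi' : HasDerivAt Ai' (x * Ai x) x) :
    HasDerivAt (fun t => t * Ai t ^ 2 - Ai' t ^ 2) (Ai x ^ 2) x := by
  refine (((hasDerivAt_id' x).mul (hAi.pow 2)).sub (hAi'.pow 2)).congr_deriv ?_
  simp only [Pi.pow_apply]
  ring

theorem hasDerivAt_airy_trace {x : ℝ} (hAi : HasDerivAt Ai (Ai' x) x)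
    (hAi' : HasDerivAt Ai' (x * Ai x) x) :
    HasDerivAt (fun t => 1 / 3 * (2 * t ^ 2 * Ai t ^ 2 - 2 * t * Ai' t ^ 2 - Ai t * Ai' t))
      (x * Ai x ^ 2 - Ai' x ^ 2) x := by
  have hsq := (hasDerivAt_pow 2 x).const_mul 2
  have hlin := (hasDerivAt_id' x).const_mul 2
  refine ((((hsq.mul (hAi.pow 2)).sub (hlin.mul (hAi'.pow 2))).sub (hAi.mul hAi')).const_mul
    (1 / 3 : ℝ)).congr_deriv ?_
  simp only [Pi.pow_apply]
  ring

theorem SuperexpDecay.mul_sq_sub_sq (hdecay : SuperexpDecay Ai) (hdecay' : SuperexpDecay Ai') :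
    SuperexpDecay fun t => t * Ai t ^ 2 - Ai' t ^ 2 :=
  ((hdecay.mul hdecay).pow_mul 1).sub (hdecay'.mul hdecay') |>.congr fun t => by ring

theorem integral_Ioi_sq_eq (hderiv : ∀ t, HasDerivAt Ai (Ai' t) t)
    (hderiv' : ∀ t, HasDerivAt Ai' (t * Ai t) t) (hdecay : SuperexpDecay Ai)
    (hdecay' : SuperexpDecay Ai') (x : ℝ) :
    ∫ u in Ioi x, Ai u ^ 2 = Ai' x ^ 2 - x * Ai x ^ 2 := by
  have hcont : Continuous Ai := continuous_iff_continuousAt.2 fun t => (hderiv t).continuousAt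
  rw [SuperexpDecay.integral_Ioi_of_hasDerivAt
    (fun t => hasDerivAt_mul_sq_sub_sq (hderiv t) (hderiv' t))
    (hdecay.mul_sq_sub_sq hdecay').tendsto_zero
    (hdecay.mul hdecay |>.congr fun t => (sq _).symm) (by fun_prop)]
  ring

theorem integral_Ioi_mul_sq_sub_sq (hderiv : ∀ t, HasDerivAt Ai (Ai' t) t)
    (hderiv' : ∀ t, HasDerivAt Ai' (t * Ai t) t) (hdecay : SuperexpDecay Ai)
    (hdecay' : SuperexpDecay Ai') (s : ℝ) :
    ∫ x in Ioi s, (x * Ai x ^ 2 - Ai' x ^ 2) =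
      -(1 / 3 * (2 * s ^ 2 * Ai s ^ 2 - 2 * s * Ai' s ^ 2 - Ai s * Ai' s)) := by
  have hcont : Continuous Ai := continuous_iff_continuousAt.2 fun t => (hderiv t).continuousAt
  have hcont' : Continuous Ai' := continuous_iff_continuousAt.2 fun t => (hderiv' t).continuousAt
  have hF0 : SuperexpDecay fun t =>
      1 / 3 * (2 * t ^ 2 * Ai t ^ 2 - 2 * t * Ai' t ^ 2 - Ai t * Ai' t) := by
    refine (((((hdecay.mul hdecay).pow_mul 2).const_mul 2).sub
      (((hdecay'.mul hdecay').pow_mul 1).const_mul 2)).sub (hdecay.mul hdecay')).const_mul (1 / 3)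
      |>.congr fun t => ?_
    ring
  exact SuperexpDecay.integral_Ioi_of_hasDerivAt
    (fun t => hasDerivAt_airy_trace (hderiv t) (hderiv' t)) hF0.tendsto_zero
    (hdecay.mul_sq_sub_sq hdecay') (by fun_prop) s

end Airy

/-- Closed form for the trace of the Airy kernel operator on `L²(s,∞)`:
`∫_s^∞ K_Airy(x,x) dx = (1/3)(2 s² Ai(s)² − 2 s Ai'(s)² − Ai(s) Ai'(s))`,
where `K_Airy(x,x) = ∫_0^∞ Ai(x+λ)² dλ`. -/
theorem airy_kernel_trace (Ai Ai' : ℝ → ℝ)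
    (hderiv : ∀ t, HasDerivAt Ai (Ai' t) t)
    (hderiv' : ∀ t, HasDerivAt Ai' (t * Ai t) t)
    (hdecay : ∀ c : ℝ, Filter.Tendsto (fun t => Real.exp (c * t) * Ai t) Filter.atTop (nhds 0))
    (hdecay' : ∀ c : ℝ, Filter.Tendsto (fun t => Real.exp (c * t) * Ai' t) Filter.atTop (nhds 0))
    (s : ℝ) :
    ∫ x in Set.Ioi s, (∫ l in Set.Ioi (0:ℝ), Ai (x + l) ^ 2)
      = (1 / 3) * (2 * s ^ 2 * Ai s ^ 2 - 2 * s * Ai' s ^ 2 - Ai s * Ai' s) := by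
  have hdiag : ∀ x, ∫ l in Ioi (0 : ℝ), Ai (x + l) ^ 2 = -(x * Ai x ^ 2 - Ai' x ^ 2) := fun x => by
    rw [setIntegral_Ioi_zero_comp_const_add (fun u => Ai u ^ 2),
      integral_Ioi_sq_eq hderiv hderiv' hdecay hdecay', neg_sub]
  simp_rw [hdiag, integral_neg, integral_Ioi_mul_sq_sub_sq hderiv hderiv' hdecay hdecay', neg_neg]
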